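/- Under the m-component model (A1)–(A4) with n > m fixed, and assuming υ_O² := lim_{d→∞} d^{-1} Σ_{i=m+1}^d λ_i² exists, for every k = 1,…,n the error term ε_{k*} = Σ_{i=m+1}^d w_{i*}(û_kᵀu_i) is stochastically bounded as d → ∞: ε_{k*} = O_p(1). -/

import Mathlib

/-!
Write `ε_{k*} = ∑_{i>m} z_{i*} c_i` with `c_i = λ_i^{1/2} û_kᵀu_i`. Every `c_i` is a function of
the data, so the centred, standardised score `z_{i*}` is independent of all the `c_j` and of the
other `z_{j*}`. Hence the summands are orthogonal in `L²`, and
`E ε_{k*}² = ∑_{i>m} λ_i E(û_kᵀu_i)² ≤ λ_{m+1} E‖û_k‖² = λ_{m+1}` by Bessel's inequality and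
monotonicity of the `λ_i`. By (A3) this is bounded, and Chebyshev's inequality gives `O_p(1)`.
-/

open MeasureTheory ProbabilityTheory Filter

noncomputable section

/-- `Y d = O_p(a d)` as `d → ∞`: for every `ε > 0` there exist `M` and `d₀` such that
`P(|Y d| > M * a d) < ε` for all `d ≥ d₀`. -/
def IsOp {Ω : Type*} [MeasurableSpace Ω] (P : Measure Ω) (Y : ℕ → Ω → ℝ) (a : ℕ → ℝ) : Prop :=
  ∀ ε : ℝ, 0 < ε → ∃ M : ℝ, ∃ d₀ : ℕ, ∀ d, d₀ ≤ d →
    P {ω | M * a d < |Y d ω|} < ENNReal.ofReal ε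

/-- Convergence in probability to a (possibly random) limit `c`. -/
def TendstoInProb {Ω : Type*} [MeasurableSpace Ω] (P : Measure Ω) (Y : ℕ → Ω → ℝ)
    (c : Ω → ℝ) : Prop :=
  ∀ ε : ℝ, 0 < ε → Tendsto (fun d => P {ω | ε < |Y d ω - c ω|}) atTop (nhds 0)

/-- The `m`-component model (A1)–(A4) with fixed sample size `n`, together with, for each
dimension `d`, the eigenvalue–eigenvector pairs `(λ̂_k, û_k)` of the sample covariance matrix
`S_d = n⁻¹ X Xᵀ`. -/
structure PCAModel {Ω : Type*} [MeasurableSpace Ω] (P : Measure Ω) (n m : ℕ) where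
  hnm : m < n
  /-- spike strengths σ_i², `i < m` (0-indexed) -/
  σ2 : ℕ → ℝ
  hσ2_pos : ∀ i, i < m → 0 < σ2 i
  hσ2_mono : ∀ i j, i ≤ j → j < m → σ2 j ≤ σ2 i
  /-- `lam d i` : the `i`-th population principal component variance in dimension `d` -/
  lam : ℕ → ℕ → ℝ
  hlam_nonneg : ∀ d i, 0 ≤ lam d i
  hlam_mono : ∀ d i j, i ≤ j → lam d j ≤ lam d i
  /-- (A1) -/
  hA1 : ∀ d i, i < m → lam d i = σ2 i * d
  τ2 : ℝ
  hτ2_pos : 0 < τ2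
  /-- (A2) -/
  hA2 : Tendsto (fun d : ℕ => (∑ i ∈ Finset.Ico m d, lam d i) / d) atTop (nhds τ2)
  /-- (A3) -/
  hA3 : ∃ B : ℝ, ∀ i, m ≤ i → ∀ᶠ d in atTop, lam d i < B
  /-- normalized scores `z i j`, `i : ℕ`, `j : Fin n` -/
  z : ℕ → Fin n → Ω → ℝ
  hz_meas : ∀ i j, Measurable (z i j)
  /-- (A4): joint independence of all normalized scores -/
  hz_indep : iIndepFun (fun p : ℕ × Fin n => z p.1 p.2) P
  hz_mean : ∀ i j, ∫ ω, z i j ω ∂P = 0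
  hz_var : ∀ i j, ∫ ω, (z i j ω) ^ 2 ∂P = 1
  hz_mem4 : ∀ i j, MemLp (z i j) 4 P
  /-- (A4): uniformly bounded fourth moments -/
  hz_four : ∃ C : ℝ, ∀ i j, ∫ ω, (z i j ω) ^ 4 ∂P ≤ C
  /-- population principal component directions: an orthonormal basis of `ℝ^d` -/
  u : (d : ℕ) → Fin d → EuclideanSpace ℝ (Fin d)
  hu : ∀ d, Orthonormal ℝ (u d)
  /-- the observations `X_j` in dimension `d` -/
  Xvec : (d : ℕ) → Fin n → Ω → EuclideanSpace ℝ (Fin d)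
  hX : ∀ d j ω, Xvec d j ω = ∑ i : Fin d, (Real.sqrt (lam d i) * z i (j : Fin n) ω) • u d i
  /-- sample principal component variances -/
  lamhat : (d : ℕ) → Fin n → Ω → ℝ
  /-- sample principal component directions -/
  uhat : (d : ℕ) → Fin n → Ω → EuclideanSpace ℝ (Fin d)
  hlamhat_mono : ∀ d ω (k l : Fin n), k ≤ l → lamhat d l ω ≤ lamhat d k ω
  hlamhat_nonneg : ∀ d ω k, 0 ≤ lamhat d k ω
  huhat_unit : ∀ d ω k, ‖uhat d k ω‖ = 1
  huhat_orth : ∀ d, n ≤ d → ∀ ω (k l : Fin n), k ≠ l →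
    (inner ℝ (uhat d k ω) (uhat d l ω) : ℝ) = 0
  /-- `(λ̂_k, û_k)` are eigenpairs of `S_d = n⁻¹ ∑_j X_j X_jᵀ` -/
  heig : ∀ d, n ≤ d → ∀ (k : Fin n) ω,
    (n : ℝ)⁻¹ • ∑ j : Fin n, (inner ℝ (Xvec d j ω) (uhat d k ω) : ℝ) • Xvec d j ω
      = lamhat d k ω • uhat d k ω
  /-- vectors orthogonal to all the `û_k` are annihilated by `S_d`, so that `û_1,…,û_n` carry
  all of the spectrum of `S_d` -/
  heig_complete : ∀ d, n ≤ d → ∀ ω (v : EuclideanSpace ℝ (Fin d)),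
    (∀ k : Fin n, (inner ℝ (uhat d k ω) v : ℝ) = 0) →
    (n : ℝ)⁻¹ • ∑ j : Fin n, (inner ℝ (Xvec d j ω) v : ℝ) • Xvec d j ω = 0
  /-- the sample eigenpairs are functions of the data -/
  hlamhat_meas : ∀ d k, Measurable[MeasurableSpace.comap
    (fun ω => fun p : ℕ × Fin n => z p.1 p.2 ω) inferInstance] (lamhat d k)
  huhat_meas : ∀ d k, Measurable[MeasurableSpace.comap
    (fun ω => fun p : ℕ × Fin n => z p.1 p.2 ω) inferInstance] (uhat d k)

namespace PCAModel

variable {Ω : Type*} [MeasurableSpace Ω] {P : Measure Ω} {n m : ℕ}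

/-- The `m × m` matrix `W = W₁ W₁ᵀ`, where `W₁` has entries `σ_i z_{ij}`. -/
def Wmat (M : PCAModel P n m) (ω : Ω) : Fin m → Fin m → ℝ := fun i i' =>
  ∑ j : Fin n, (Real.sqrt (M.σ2 i) * M.z i j ω) * (Real.sqrt (M.σ2 i') * M.z i' j ω)

/-- The σ-algebra generated by `W₁`. -/
def G (M : PCAModel P n m) : MeasurableSpace Ω :=
  MeasurableSpace.comap
    (fun ω => fun p : Fin m × Fin n => Real.sqrt (M.σ2 p.1) * M.z p.1 p.2 ω) inferInstance

end PCAModel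

/-- The model together with an additional independent observation `X_*`. -/
structure PCAModelStar {Ω : Type*} [MeasurableSpace Ω] (P : Measure Ω) (n m : ℕ)
    extends PCAModel P n m where
  /-- normalized scores of the new observation -/
  zstar : ℕ → Ω → ℝ
  hzstar_meas : ∀ i, Measurable (zstar i)
  hzstar_mean : ∀ i, ∫ ω, zstar i ω ∂P = 0
  hzstar_var : ∀ i, ∫ ω, (zstar i ω) ^ 2 ∂P = 1
  hzstar_mem4 : ∀ i, MemLp (zstar i) 4 P
  hzstar_four : ∃ C : ℝ, ∀ i, ∫ ω, (zstar i ω) ^ 4 ∂P ≤ C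
  /-- all scores (of the data and of the new observation) are jointly independent -/
  hall_indep : iIndepFun
    (fun p : ℕ × Option (Fin n) => fun ω => (p.2).elim (zstar p.1 ω) (fun j => z p.1 j ω)) P
  /-- the new observation `X_*` -/
  Xstar : (d : ℕ) → Ω → EuclideanSpace ℝ (Fin d)
  hXstar : ∀ d ω, Xstar d ω = ∑ i : Fin d, (Real.sqrt (lam d i) * zstar i ω) • u d i

lemma ProbabilityTheory.Indep.indepFun_of_measurable {Ω β γ : Type*} {mΩ : MeasurableSpace Ω}
    {P : Measure Ω} [MeasurableSpace β] [MeasurableSpace γ]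
    {m₁ m₂ : MeasurableSpace Ω} (h : Indep m₁ m₂ P) {f : Ω → β} {g : Ω → γ}
    (hf : Measurable[m₁] f) (hg : Measurable[m₂] g) : IndepFun f g P := by
  rw [IndepFun_iff_Indep]
  exact indep_of_indep_of_le_left (indep_of_indep_of_le_right h hg.comap_le) hf.comap_le

lemma MeasureTheory.MemLp.mul_of_abs_le {Ω : Type*} {mΩ : MeasurableSpace Ω} {P : Measure Ω}
    {ξ A : Ω → ℝ} (hξ : MemLp ξ 2 P) (hA : AEStronglyMeasurable A P)
    {C : ℝ} (hC : ∀ ω, |A ω| ≤ C) : MemLp (fun ω => ξ ω * A ω) 2 P := by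
  simpa [mul_comm] using hξ.mul' (memLp_top_of_bound hA C (Eventually.of_forall hC))

section SecondMoments

variable {Ω : Type*} {mΩ : MeasurableSpace Ω} {P : Measure Ω}

lemma integral_mul_eq_zero_of_indep {ξ B : Ω → ℝ} {𝓕 : MeasurableSpace Ω}
    (hindep : Indep (MeasurableSpace.comap ξ inferInstance) 𝓕 P) (h𝓕 : 𝓕 ≤ mΩ)
    (hB : Measurable[𝓕] B) (hξ : AEStronglyMeasurable[mΩ] ξ P) (hξ_mean : ∫ ω, ξ ω ∂P = 0) :
    ∫ ω, ξ ω * B ω ∂P = 0 := by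
  rw [(hindep.indepFun_of_measurable (comap_measurable ξ) hB).integral_fun_mul_eq_mul_integral
    hξ (hB.mono h𝓕 le_rfl).aestronglyMeasurable, hξ_mean, zero_mul]

lemma integral_sq_mul_eq_of_indep {ξ B : Ω → ℝ} {𝓕 : MeasurableSpace Ω}
    (hindep : Indep (MeasurableSpace.comap ξ inferInstance) 𝓕 P) (h𝓕 : 𝓕 ≤ mΩ)
    (hB : Measurable[𝓕] B) (hξ : AEStronglyMeasurable[mΩ] ξ P) (hξ_var : ∫ ω, ξ ω ^ 2 ∂P = 1) :
    ∫ ω, ξ ω ^ 2 * B ω ∂P = ∫ ω, B ω ∂P := by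
  rw [(hindep.indepFun_of_measurable ((comap_measurable ξ).pow_const 2) hB)
    |>.integral_fun_mul_eq_mul_integral (hξ.pow 2) (hB.mono h𝓕 le_rfl).aestronglyMeasurable,
    hξ_var, one_mul]

theorem integral_sq_sum_mul_eq_of_indep {ι : Type*} [DecidableEq ι] {ξ A : ι → Ω → ℝ}
    {𝓕 : ι → MeasurableSpace Ω} (T : Finset ι)
    (hindep : ∀ l, Indep (MeasurableSpace.comap (ξ l) inferInstance) (𝓕 l) P)
    (h𝓕 : ∀ l, 𝓕 l ≤ mΩ) (hξ_meas : ∀ l l', l' ≠ l → Measurable[𝓕 l] (ξ l'))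
    (hA_meas : ∀ l l', Measurable[𝓕 l] (A l')) (hA_bdd : ∀ l, ∃ C, ∀ ω, |A l ω| ≤ C)
    (hξ : ∀ l, MemLp (ξ l) 2 P) (hξ_mean : ∀ l, ∫ ω, ξ l ω ∂P = 0)
    (hξ_var : ∀ l, ∫ ω, ξ l ω ^ 2 ∂P = 1) :
    ∫ ω, (∑ l ∈ T, ξ l ω * A l ω) ^ 2 ∂P = ∑ l ∈ T, ∫ ω, A l ω ^ 2 ∂P := by
  have hterm : ∀ l, MemLp (fun ω => ξ l ω * A l ω) 2 P := fun l =>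
    (hξ l).mul_of_abs_le ((hA_meas l l).mono (h𝓕 l) le_rfl).aestronglyMeasurable
      (hA_bdd l).choose_spec
  have hpair : ∀ l l', Integrable (fun ω => (ξ l ω * A l ω) * (ξ l' ω * A l' ω)) P :=
    fun l l' => (hterm l).integrable_mul (hterm l')
  have hcov : ∀ l l', ∫ ω, (ξ l ω * A l ω) * (ξ l' ω * A l' ω) ∂P
      = if l = l' then ∫ ω, A l ω ^ 2 ∂P else 0 := by
    intro l l'
    split_ifs with h
    · subst h
      calc ∫ ω, (ξ l ω * A l ω) * (ξ l ω * A l ω) ∂P = ∫ ω, ξ l ω ^ 2 * A l ω ^ 2 ∂P := by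
            congr 1 with ω; ring
        _ = ∫ ω, A l ω ^ 2 ∂P := integral_sq_mul_eq_of_indep (hindep l) (h𝓕 l)
            ((hA_meas l l).pow_const 2) (hξ l).aestronglyMeasurable (hξ_var l)
    · calc ∫ ω, (ξ l ω * A l ω) * (ξ l' ω * A l' ω) ∂P
            = ∫ ω, ξ l ω * (A l ω * (ξ l' ω * A l' ω)) ∂P := by simp only [mul_assoc]
        _ = 0 := integral_mul_eq_zero_of_indep (hindep l) (h𝓕 l)
            ((hA_meas l l).mul ((hξ_meas l l' (Ne.symm h)).mul (hA_meas l l')))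
            (hξ l).aestronglyMeasurable (hξ_mean l)
  simp_rw [sq, Finset.sum_mul_sum]
  rw [integral_finsetSum T fun l _ => integrable_finsetSum T fun l' _ => hpair l l']
  refine Finset.sum_congr rfl fun l hl => ?_
  rw [integral_finsetSum T fun l' _ => hpair l l']
  simp only [hcov, Finset.sum_ite_eq, if_pos hl, sq]

theorem isOp_one_of_integral_sq_le [IsFiniteMeasure P] {Y : ℕ → Ω → ℝ} {C : ℝ}
    (hY : ∀ d, MemLp (Y d) 2 P) (hC : ∀ᶠ d in atTop, ∫ ω, Y d ω ^ 2 ∂P ≤ C) :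
    IsOp P Y (fun _ => 1) := by
  intro ε hε
  obtain ⟨d₀, hd₀⟩ := eventually_atTop.mp hC
  set K := max C 1
  have hK : 0 < K := lt_of_lt_of_le one_pos (le_max_right _ _)
  refine ⟨Real.sqrt (2 * K / ε), d₀, fun d hd => ?_⟩
  have hchebyshev : 2 * K / ε * P.real {ω | 2 * K / ε ≤ Y d ω ^ 2} ≤ K :=
    (mul_meas_ge_le_integral_of_nonneg (Eventually.of_forall fun ω => sq_nonneg (Y d ω))
      (hY d).integrable_sq _).trans ((hd₀ d hd).trans (le_max_left _ _))
  have hreal : P.real {ω | 2 * K / ε ≤ Y d ω ^ 2} ≤ ε / 2 := by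
    rw [← mul_le_mul_iff_of_pos_left (show 0 < 2 * K / ε by positivity)]
    calc _ ≤ K := hchebyshev
      _ = 2 * K / ε * (ε / 2) := by field_simp
  have hsub : {ω | Real.sqrt (2 * K / ε) * 1 < |Y d ω|} ⊆ {ω | 2 * K / ε ≤ Y d ω ^ 2} := by
    intro ω (hω : Real.sqrt (2 * K / ε) * 1 < |Y d ω|)
    rw [mul_one, Real.sqrt_lt' ((Real.sqrt_nonneg _).trans_lt hω), sq_abs] at hω
    exact hω.le
  calc P {ω | Real.sqrt (2 * K / ε) * 1 < |Y d ω|}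
      ≤ P {ω | 2 * K / ε ≤ Y d ω ^ 2} := measure_mono hsub
    _ = ENNReal.ofReal (P.real {ω | 2 * K / ε ≤ Y d ω ^ 2}) := (ofReal_measureReal).symm
    _ ≤ ENNReal.ofReal (ε / 2) := ENNReal.ofReal_le_ofReal hreal
    _ < ENNReal.ofReal ε := (ENNReal.ofReal_lt_ofReal_iff hε).mpr (half_lt_self hε)

end SecondMoments

theorem Orthonormal.sum_mul_inner_sq_le {ι E : Type*} [NormedAddCommGroup E]
    [InnerProductSpace ℝ E] {v : ι → E} (hv : Orthonormal ℝ v) (x : E) (s : Finset ι)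
    {w : ι → ℝ} {W : ℝ} (hw : ∀ i ∈ s, 0 ≤ w i ∧ w i ≤ W) (hW : 0 ≤ W) :
    ∑ i ∈ s, w i * inner ℝ x (v i) ^ 2 ≤ W * ‖x‖ ^ 2 := by
  calc ∑ i ∈ s, w i * inner ℝ x (v i) ^ 2 ≤ ∑ i ∈ s, W * ‖inner ℝ (v i) x‖ ^ 2 := by
        refine Finset.sum_le_sum fun i hi => ?_
        rw [Real.norm_eq_abs, sq_abs, real_inner_comm]
        exact mul_le_mul_of_nonneg_right (hw i hi).2 (sq_nonneg _)
    _ = W * ∑ i ∈ s, ‖inner ℝ (v i) x‖ ^ 2 := (Finset.mul_sum _ _ _).symm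
    _ ≤ W * ‖x‖ ^ 2 := mul_le_mul_of_nonneg_left (hv.sum_inner_products_le x) hW

namespace PCAModelStar

variable {Ω : Type*} [MeasurableSpace Ω] {P : Measure Ω} {n m : ℕ} (M : PCAModelStar P n m)

def score (p : ℕ × Option (Fin n)) (ω : Ω) : ℝ :=
  p.2.elim (M.zstar p.1 ω) (fun j => M.z p.1 j ω)

lemma measurable_score (p : ℕ × Option (Fin n)) : Measurable (M.score p) := by
  rcases p with ⟨i, _ | j⟩
  · exact M.hzstar_meas i
  · exact M.hz_meas i j

abbrev otherScoresAlg (i : ℕ) : MeasurableSpace Ω :=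
  ⨆ p ∈ ({(i, none)}ᶜ : Set (ℕ × Option (Fin n))), MeasurableSpace.comap (M.score p) inferInstance

lemma otherScoresAlg_le (i : ℕ) : M.otherScoresAlg i ≤ ‹MeasurableSpace Ω› :=
  iSup₂_le fun p _ => (M.measurable_score p).comap_le

lemma indep_zstar_otherScoresAlg (i : ℕ) :
    Indep (MeasurableSpace.comap (M.zstar i) inferInstance) (M.otherScoresAlg i) P := by
  have h := indep_biSup_compl (fun p => (M.measurable_score p).comap_le) M.hall_indep.iIndep
    ({(i, none)} : Set (ℕ × Option (Fin n)))
  rwa [iSup_singleton] at h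

lemma measurable_score_otherScoresAlg {i : ℕ} {p : ℕ × Option (Fin n)} (hp : p ≠ (i, none)) :
    Measurable[M.otherScoresAlg i] (M.score p) :=
  (comap_measurable (M.score p)).mono
    (le_biSup (fun p => MeasurableSpace.comap (M.score p) inferInstance) hp) le_rfl

lemma measurable_uhat_otherScoresAlg (i d : ℕ) (k : Fin n) :
    Measurable[M.otherScoresAlg i] (M.uhat d k) := by
  have hdata : Measurable[M.otherScoresAlg i] (fun ω => fun p : ℕ × Fin n => M.z p.1 p.2 ω) :=
    @measurable_pi_lambda Ω (ℕ × Fin n) (fun _ => ℝ) (M.otherScoresAlg i) _ _ fun q =>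
      M.measurable_score_otherScoresAlg (p := (q.1, some q.2)) (by simp)
  exact (M.huhat_meas d k).mono hdata.comap_le le_rfl

def epsStar (k : Fin n) (d : ℕ) (ω : Ω) : ℝ :=
  ∑ i ∈ Finset.univ.filter (fun i : Fin d => m ≤ (i : ℕ)),
    (Real.sqrt (M.lam d i) * M.zstar i ω) * (inner ℝ (M.uhat d k ω) (M.u d i) : ℝ)

def epsStarCoeff (k : Fin n) (d : ℕ) (i : Fin d) (ω : Ω) : ℝ :=
  Real.sqrt (M.lam d i) * (inner ℝ (M.uhat d k ω) (M.u d i) : ℝ)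

lemma epsStar_eq_sum_zstar_mul_epsStarCoeff (k : Fin n) (d : ℕ) :
    M.epsStar k d = fun ω => ∑ i ∈ Finset.univ.filter (fun i : Fin d => m ≤ (i : ℕ)),
      M.zstar i ω * M.epsStarCoeff k d i ω := by
  funext ω
  exact Finset.sum_congr rfl fun i _ => by rw [epsStarCoeff]; ring

lemma measurable_epsStarCoeff_otherScoresAlg (j : ℕ) (k : Fin n) (d : ℕ) (i : Fin d) :
    Measurable[M.otherScoresAlg j] (M.epsStarCoeff k d i) :=
  measurable_const.mul ((M.measurable_uhat_otherScoresAlg j d k).inner measurable_const)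

lemma measurable_epsStarCoeff (k : Fin n) (d : ℕ) (i : Fin d) :
    Measurable (M.epsStarCoeff k d i) :=
  (M.measurable_epsStarCoeff_otherScoresAlg 0 k d i).mono (M.otherScoresAlg_le 0) le_rfl

lemma abs_epsStarCoeff_le (k : Fin n) (d : ℕ) (i : Fin d) (ω : Ω) :
    |M.epsStarCoeff k d i ω| ≤ Real.sqrt (M.lam d i) := by
  have hinner : |(inner ℝ (M.uhat d k ω) (M.u d i) : ℝ)| ≤ 1 := by
    simpa [M.huhat_unit d ω k, (M.hu d).1 i] using abs_real_inner_le_norm (M.uhat d k ω) (M.u d i)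
  rw [epsStarCoeff, abs_mul, abs_of_nonneg (Real.sqrt_nonneg _)]
  exact mul_le_of_le_one_right (Real.sqrt_nonneg _) hinner

lemma sum_epsStarCoeff_sq_le (k : Fin n) (d : ℕ) (ω : Ω) :
    ∑ i ∈ Finset.univ.filter (fun i : Fin d => m ≤ (i : ℕ)), M.epsStarCoeff k d i ω ^ 2
      ≤ M.lam d m := by
  have h := (M.hu d).sum_mul_inner_sq_le (M.uhat d k ω)
    (Finset.univ.filter (fun i : Fin d => m ≤ (i : ℕ))) (w := fun i => M.lam d i)
    (fun i hi => ⟨M.hlam_nonneg d i, M.hlam_mono d m i (Finset.mem_filter.mp hi).2⟩)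
    (M.hlam_nonneg d m)
  simpa [epsStarCoeff, mul_pow, Real.sq_sqrt (M.hlam_nonneg d _), M.huhat_unit d ω k] using h

lemma memLp_zstar [IsFiniteMeasure P] (i : ℕ) : MemLp (M.zstar i) 2 P :=
  (M.hzstar_mem4 i).mono_exponent (by norm_num)

lemma memLp_epsStar [IsFiniteMeasure P] (k : Fin n) (d : ℕ) : MemLp (M.epsStar k d) 2 P := by
  rw [epsStar_eq_sum_zstar_mul_epsStarCoeff]
  exact memLp_finsetSum _ fun i _ => (M.memLp_zstar i).mul_of_abs_le
    (M.measurable_epsStarCoeff k d i).aestronglyMeasurable (M.abs_epsStarCoeff_le k d i)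

lemma integral_epsStar_sq_le [IsProbabilityMeasure P] (k : Fin n) (d : ℕ) :
    ∫ ω, M.epsStar k d ω ^ 2 ∂P ≤ M.lam d m := by
  set T := Finset.univ.filter (fun i : Fin d => m ≤ (i : ℕ))
  have hcoeff_sq : ∀ i, Integrable (fun ω => M.epsStarCoeff k d i ω ^ 2) P := fun i =>
    (MemLp.of_bound (M.measurable_epsStarCoeff k d i).aestronglyMeasurable _
      (Eventually.of_forall (M.abs_epsStarCoeff_le k d i)) : MemLp _ 2 P).integrable_sq
  have horth : ∫ ω, M.epsStar k d ω ^ 2 ∂P = ∑ i ∈ T, ∫ ω, M.epsStarCoeff k d i ω ^ 2 ∂P := by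
    rw [epsStar_eq_sum_zstar_mul_epsStarCoeff]
    exact integral_sq_sum_mul_eq_of_indep (ξ := fun i : Fin d => M.zstar i)
      (𝓕 := fun i => M.otherScoresAlg i) T (fun i => M.indep_zstar_otherScoresAlg i)
      (fun i => M.otherScoresAlg_le i)
      (fun i i' h => M.measurable_score_otherScoresAlg (p := ((i' : ℕ), none))
        (by simpa [Fin.val_inj] using h))
      (fun i => M.measurable_epsStarCoeff_otherScoresAlg i k d)
      (fun i => ⟨_, M.abs_epsStarCoeff_le k d i⟩)
      (fun i => M.memLp_zstar i) (fun i => M.hzstar_mean i) (fun i => M.hzstar_var i)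
  calc ∫ ω, M.epsStar k d ω ^ 2 ∂P = ∫ ω, ∑ i ∈ T, M.epsStarCoeff k d i ω ^ 2 ∂P := by
        rw [horth, integral_finsetSum T fun i _ => hcoeff_sq i]
    _ ≤ ∫ _ω, M.lam d m ∂P := integral_mono (integrable_finsetSum T fun i _ => hcoeff_sq i)
        (integrable_const _) (M.sum_epsStarCoeff_sq_le k d)
    _ = M.lam d m := by simp

end PCAModelStar

theorem statement10_general {Ω : Type*} [MeasurableSpace Ω] (P : Measure Ω) [IsProbabilityMeasure P]
    (n m : ℕ) (M : PCAModelStar P n m)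
    (k : Fin n) :
    IsOp P
      (fun d ω =>
        ∑ i ∈ Finset.univ.filter (fun i : Fin d => m ≤ (i : ℕ)),
          (Real.sqrt (M.lam d i) * M.zstar i ω) * (inner ℝ (M.uhat d k ω) (M.u d i) : ℝ))
      (fun _ => 1) := by
  obtain ⟨B, hB⟩ := M.hA3
  exact isOp_one_of_integral_sq_le (M.memLp_epsStar k)
    ((hB m le_rfl).mono fun d hd => (M.integral_epsStar_sq_le k d).trans hd.le)

/-- Lemma 2, last claim: under the m-component model (A1)–(A4) with
`n > m` fixed, if `υ_O² = lim_d d⁻¹ ∑_{i>m} λ_i²` exists, then for every `k = 1,…,n` the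
error term `ε_{k*} = ∑_{i=m+1}^d w_{i*}(û_kᵀu_i)` is `O_p(1)` as `d → ∞`. -/
theorem statement10 {Ω : Type*} [MeasurableSpace Ω] (P : Measure Ω) [IsProbabilityMeasure P]
    (n m : ℕ) (M : PCAModelStar P n m)
    (υ2 : ℝ)
    (hυ2 : Tendsto (fun d : ℕ => (∑ i ∈ Finset.Ico m d, (M.lam d i) ^ 2) / d)
      atTop (nhds υ2))
    (k : Fin n) :
    IsOp P
      (fun d ω =>
        ∑ i ∈ Finset.univ.filter (fun i : Fin d => m ≤ (i : ℕ)),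
          (Real.sqrt (M.lam d i) * M.zstar i ω) * (inner ℝ (M.uhat d k ω) (M.u d i) : ℝ))
      (fun _ => 1) :=
  statement10_general P n m M k

end
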